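/- For formal power series A(x,y), B(x,y) satisfying A = xΦ(B) and B = yΨ(A) with given one-variable series Φ, Ψ, and for nonnegative integers α, β and positive integers n, m: [x^n y^m] A^α B^β = (1 − (n−α)(m−β)/(nm)) · [t^{m−β}]Φ^n(t) · [s^{n−α}]Ψ^m(s). -/

import Mathlib

/-!
Write `A^α = x^α Φ(B)^α` and expand `Φ(B)^α = ∑ₖ [tᵏ]Φ^α · Bᵏ`: this turns `[xⁿyᵐ] A^α B^β` into a
combination of the coefficients `[x^(n-α) yᵐ] B^(β+k)`. It therefore suffices to know the one-power
formula `[xⁿyᵐ] B^β = (β/m) [t^(m-β)]Φⁿ [sⁿ]Ψᵐ`. The same expansion, with the roles of `(x, A, Φ)`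
and `(y, B, Ψ)` exchanged, reduces that formula to its mirror image for `[xⁿ y^(m-β)] A^l`, of
smaller total degree, so a strong induction on `n + m` proves both at once; the base is the axis
`n = 0`, where `B = y Ψ(0)`. The sums that appear are evaluated with the convolution identities
`∑ₖ [tᵏ]f^a [t^(M-k)]f^b = [t^M]f^(a+b)` and `∑ₖ k [tᵏ]f^a [t^(M-k)]f^b = aM/(a+b) [t^M]f^(a+b)`;
the second is the first applied to the Euler operator `X d/dX`, since
`(a+b) (f^a)' f^b = a (f^(a+b))'`.
-/

/-- The composition `Φ(B) = ∑ₖ (coeff k Φ) Bᵏ` of a one-variable power series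
`Φ` with a multivariate power series `B` having zero constant coefficient,
given coefficientwise (only `k ≤ |d|` contributes to the coefficient of the
monomial `d` when the constant coefficient of `B` vanishes). -/
noncomputable def phiComp {m : ℕ} (Φ : PowerSeries ℚ) (B : MvPowerSeries (Fin m) ℚ) :
    MvPowerSeries (Fin m) ℚ :=
  fun d => ∑ k ∈ Finset.range ((d.sum fun _ v => v) + 1),
    PowerSeries.coeff k Φ * MvPowerSeries.coeff d (B ^ k)

/-- coefficient extraction at an integer index (zero at negative indices). -/
noncomputable def coeffZ (k : ℤ) (f : PowerSeries ℚ) : ℚ :=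
  if 0 ≤ k then PowerSeries.coeff k.toNat f else 0

open Finset

namespace PowerSeries

variable {R : Type*} [CommSemiring R]

theorem coeff_X_mul_derivative (f : R⟦X⟧) (k : ℕ) :
    coeff k (X * d⁄dX R f) = k * coeff k f := by
  cases k with
  | zero => simp
  | succ k => rw [coeff_succ_X_mul, coeff_derivative, mul_comm]; push_cast; ring

theorem natCast_add_mul_derivative_pow_mul_pow (f : R⟦X⟧) (a b : ℕ) :
    ((a + b : ℕ) : R⟦X⟧) * (d⁄dX R (f ^ a) * f ^ b) = a * d⁄dX R (f ^ (a + b)) := by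
  rcases Nat.eq_zero_or_pos a with rfl | ha
  · simp
  obtain ⟨a, rfl⟩ := Nat.exists_eq_add_of_le' ha
  rw [derivative_pow, derivative_pow, show a + 1 + b - 1 = a + b by omega, Nat.add_sub_cancel,
    pow_add f a b]
  push_cast
  ring

end PowerSeries

section CoeffZ

open PowerSeries

theorem coeffZ_natCast (n : ℕ) (f : ℚ⟦X⟧) : coeffZ n f = coeff n f := by
  simp [coeffZ]

theorem coeffZ_natCast_sub {a b : ℕ} (h : b ≤ a) (f : ℚ⟦X⟧) :
    coeffZ ((a : ℤ) - b) f = coeff (a - b) f := by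
  rw [← Nat.cast_sub h, coeffZ_natCast]

theorem coeffZ_one (k : ℤ) : coeffZ k 1 = if k = 0 then 1 else 0 := by
  unfold coeffZ
  split_ifs <;> simp [PowerSeries.coeff_one] <;> omega

theorem coeffZ_of_neg {k : ℤ} (hk : k < 0) (f : ℚ⟦X⟧) : coeffZ k f = 0 :=
  if_neg (by omega)

theorem coeffZ_natCast_mul (c : ℕ) (f : ℚ⟦X⟧) (k : ℤ) : coeffZ k (c * f) = c * coeffZ k f := by
  unfold coeffZ
  split_ifs
  · rw [← map_natCast C, coeff_C_mul]
  · rw [mul_zero]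

theorem coeffZ_X_mul_derivative (f : ℚ⟦X⟧) (k : ℤ) :
    coeffZ k (X * d⁄dX ℚ f) = k * coeffZ k f := by
  unfold coeffZ
  split_ifs with hk
  · rw [coeff_X_mul_derivative, ← Int.cast_natCast, Int.toNat_of_nonneg hk]
  · rw [mul_zero]

theorem sum_coeff_mul_coeffZ_sub (f g : ℚ⟦X⟧) {M : ℤ} {K : ℕ} (hK : M < K) :
    ∑ k ∈ range K, coeff k f * coeffZ (M - k) g = coeffZ M (f * g) := by
  rcases lt_or_ge M 0 with hM | hM
  · rw [coeffZ_of_neg hM, sum_eq_zero fun k _ => by rw [coeffZ_of_neg (by omega), mul_zero]]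
  lift M to ℕ using hM
  rw [coeffZ_natCast, coeff_mul, Nat.sum_antidiagonal_eq_sum_range_succ_mk,
    ← sum_subset (range_subset_range.2 (by omega : M + 1 ≤ K))]
  · refine sum_congr rfl fun k hk => ?_
    rw [mem_range] at hk
    rw [← Nat.cast_sub (by omega), coeffZ_natCast]
  · intro k _ hk
    rw [mem_range] at hk
    rw [coeffZ_of_neg (by omega), mul_zero]

theorem sum_mul_coeff_pow_mul_coeffZ_sub (f : ℚ⟦X⟧) (a b : ℕ) {M : ℤ} {K : ℕ} (hK : M < K) :
    ∑ k ∈ range K, k * coeff k (f ^ a) * coeffZ (M - k) (f ^ b) =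
      a * M / (a + b) * coeffZ M (f ^ (a + b)) := by
  have hsum : ∑ k ∈ range K, k * coeff k (f ^ a) * coeffZ (M - k) (f ^ b) =
      coeffZ M (X * d⁄dX ℚ (f ^ a) * f ^ b) := by
    simp_rw [← coeff_X_mul_derivative]
    exact sum_coeff_mul_coeffZ_sub _ _ hK
  rcases Nat.eq_zero_or_pos a with rfl | ha
  · rw [hsum, pow_zero, derivative_one, mul_zero, zero_mul]
    simp [coeffZ]
  have key : ((a + b : ℕ) : ℚ) * coeffZ M (X * d⁄dX ℚ (f ^ a) * f ^ b) =
      a * M * coeffZ M (f ^ (a + b)) := by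
    rw [← coeffZ_natCast_mul, mul_assoc, mul_left_comm, natCast_add_mul_derivative_pow_mul_pow,
      mul_left_comm, coeffZ_natCast_mul, coeffZ_X_mul_derivative, mul_assoc]
  have hab : (a + b : ℚ) ≠ 0 := by positivity
  rw [hsum, div_mul_eq_mul_div, eq_div_iff hab]
  push_cast at key
  linear_combination key

end CoeffZ

section PhiComp

open MvPowerSeries

variable {k : ℕ} {B : MvPowerSeries (Fin k) ℚ}

theorem coeff_phiComp (Φ : PowerSeries ℚ) (B : MvPowerSeries (Fin k) ℚ) (d : Fin k →₀ ℕ) :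
    coeff d (phiComp Φ B) =
      ∑ j ∈ range (d.degree + 1), PowerSeries.coeff j Φ * coeff d (B ^ j) :=
  rfl

theorem coeff_pow_eq_zero_of_degree_lt (hB : constantCoeff B = 0) {d : Fin k →₀ ℕ} {j : ℕ}
    (h : d.degree < j) : coeff d (B ^ j) = 0 :=
  coeff_of_lt_order (lt_of_lt_of_le (by exact_mod_cast h)
    (le_order_pow_of_constantCoeff_eq_zero j hB))

theorem phiComp_eq_subst (hB : constantCoeff B = 0) (Φ : PowerSeries ℚ) :
    phiComp Φ B = PowerSeries.subst B Φ := by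
  ext d
  rw [PowerSeries.coeff_subst (PowerSeries.HasSubst.of_constantCoeff_zero hB),
    finsum_eq_finsetSum_of_support_subset (s := range (d.degree + 1)), coeff_phiComp]
  · rfl
  · intro j hj
    rw [Function.mem_support] at hj
    rw [coe_range, Set.mem_Iio, Nat.lt_succ_iff]
    by_contra! h
    exact hj (by rw [coeff_pow_eq_zero_of_degree_lt hB h, smul_zero])

theorem phiComp_pow (hB : constantCoeff B = 0) (Φ : PowerSeries ℚ) (a : ℕ) :
    phiComp Φ B ^ a = phiComp (Φ ^ a) B := by
  rw [phiComp_eq_subst hB, phiComp_eq_subst hB,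
    PowerSeries.subst_pow (PowerSeries.HasSubst.of_constantCoeff_zero hB)]

theorem coeff_phiComp_mul (hB : constantCoeff B = 0) (Φ : PowerSeries ℚ)
    (G : MvPowerSeries (Fin k) ℚ) (d : Fin k →₀ ℕ) :
    coeff d (phiComp Φ B * G) =
      ∑ j ∈ range (d.degree + 1), PowerSeries.coeff j Φ * coeff d (B ^ j * G) := by
  have extend : ∀ p ∈ antidiagonal d, coeff p.1 (phiComp Φ B) * coeff p.2 G =
      ∑ j ∈ range (d.degree + 1), PowerSeries.coeff j Φ * (coeff p.1 (B ^ j) * coeff p.2 G) := by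
    intro p hp
    have hle : p.1.degree ≤ d.degree := by
      rw [← mem_antidiagonal.1 hp, map_add]
      exact Nat.le_add_right _ _
    rw [coeff_phiComp, sum_mul, ← sum_subset (range_subset_range.2 (Nat.succ_le_succ hle))]
    · exact sum_congr rfl fun j _ => mul_assoc _ _ _
    · intro j _ hj
      rw [mem_range, not_lt] at hj
      rw [coeff_pow_eq_zero_of_degree_lt hB hj, zero_mul, mul_zero]
  rw [coeff_mul, sum_congr rfl extend, sum_comm]
  simp_rw [← mul_sum, ← coeff_mul]

end PhiComp

section System

open MvPowerSeries Finsupp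

variable {k : ℕ} {A B : MvPowerSeries (Fin k) ℚ} {Φ Ψ : PowerSeries ℚ} {i j : Fin k}

theorem coeff_single_add_single_X_pow_mul (hij : i ≠ j) (a n m : ℕ)
    (F : MvPowerSeries (Fin k) ℚ) :
    coeff (single i n + single j m) (X i ^ a * F) =
      if a ≤ n then coeff (single i (n - a) + single j m) F else 0 := by
  rw [X_pow_eq]
  split_ifs with ha
  · rw [show single i n + single j m = single i a + (single i (n - a) + single j m) by
      rw [← add_assoc, ← single_add, Nat.add_sub_cancel' ha], coeff_add_monomial_mul, one_mul]
  · rw [coeff_monomial_mul, if_neg]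
    intro hle
    have := hle i
    simp [single_eq_of_ne' hij.symm] at this
    omega

theorem constantCoeff_eq_zero_of_eq_X_mul (hA : A = X i * phiComp Φ B) :
    constantCoeff A = 0 := by
  rw [hA, map_mul, constantCoeff_X, zero_mul]

theorem coeff_single_add_single_pow_mul (hij : i ≠ j) (hA : A = X i * phiComp Φ B)
    (hB : constantCoeff B = 0) (α n m : ℕ) (G : MvPowerSeries (Fin k) ℚ) :
    coeff (single i n + single j m) (A ^ α * G) =
      if α ≤ n then
        ∑ l ∈ range (n - α + m + 1),
          PowerSeries.coeff l (Φ ^ α) * coeff (single i (n - α) + single j m) (B ^ l * G)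
      else 0 := by
  rw [hA, mul_pow, mul_assoc, coeff_single_add_single_X_pow_mul hij, phiComp_pow hB,
    coeff_phiComp_mul hB, map_add, degree_single, degree_single]

theorem coeff_single_pow (hij : i ≠ j) (hA : A = X i * phiComp Φ B)
    (hB : B = X j * phiComp Ψ A) (m β : ℕ) :
    coeff (single j m) (B ^ β) = if β = m then PowerSeries.constantCoeff Ψ ^ m else 0 := by
  rw [← add_zero (single j m), ← single_zero i, ← mul_one (B ^ β),
    coeff_single_add_single_pow_mul hij.symm hB (constantCoeff_eq_zero_of_eq_X_mul hA)]
  by_cases hβm : β ≤ m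
  · rw [if_pos hβm, Finset.sum_eq_single 0 (fun l _ hl => ?_) (by simp), pow_zero, mul_one,
      single_zero, add_zero, coeff_one, PowerSeries.coeff_zero_eq_constantCoeff_apply, map_pow]
    · by_cases hβ : β = m
      · simp [hβ]
      · rw [if_neg (single_ne_zero.2 (by omega)), if_neg hβ, mul_zero]
    · rw [hA, mul_pow, mul_assoc, add_comm, coeff_single_add_single_X_pow_mul hij,
        if_neg (by omega), mul_zero]
  · rw [if_neg hβm, if_neg (by omega)]

theorem coeff_single_add_single_pow (hij : i ≠ j) (hA : A = X i * phiComp Φ B)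
    (hB : B = X j * phiComp Ψ A) (n : ℕ) {m : ℕ} (hm : 1 ≤ m) (β : ℕ) :
    coeff (single i n + single j m) (B ^ β) =
      β / m * coeffZ (m - β) (Φ ^ n) * PowerSeries.coeff n (Ψ ^ m) := by
  induction hN : n + m using Nat.strong_induction_on generalizing i j A B Φ Ψ n m β with
  | _ N ih =>
  rcases Nat.eq_zero_or_pos n with rfl | hn
  · rw [single_zero, zero_add, coeff_single_pow hij hA hB, pow_zero, coeffZ_one,
      PowerSeries.coeff_zero_eq_constantCoeff_apply, map_pow]
    by_cases hβm : β = m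
    · subst hβm
      rw [if_pos rfl, if_pos (sub_self _), div_self (by positivity), one_mul, one_mul]
    · rw [if_neg hβm, if_neg (by omega), mul_zero, zero_mul]
  rcases Nat.eq_zero_or_pos β with rfl | hβ
  · rw [pow_zero, coeff_one, if_neg (ne_of_apply_ne (· j) (by simp [single_eq_of_ne' hij]; omega)),
      Nat.cast_zero, zero_div, zero_mul, zero_mul]
  rw [add_comm, ← mul_one (B ^ β), coeff_single_add_single_pow_mul hij.symm hB
    (constantCoeff_eq_zero_of_eq_X_mul hA)]
  split_ifs with hβm
  swap
  · rw [coeffZ_of_neg (by omega), mul_zero, zero_mul]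
  have hA_pow (l : ℕ) : coeff (single j (m - β) + single i n) (A ^ l * 1) =
      l / n * coeffZ (n - l) (Ψ ^ (m - β)) * PowerSeries.coeff (m - β) (Φ ^ n) := by
    rw [mul_one]
    -- the induction hypothesis for the mirrored system `(j, i, B, A, Ψ, Φ)`
    exact ih _ (by omega) hij.symm hB hA (m - β) hn l rfl
  calc _ = PowerSeries.coeff (m - β) (Φ ^ n) / n * ∑ l ∈ range (m - β + n + 1),
        l * PowerSeries.coeff l (Ψ ^ β) * coeffZ (n - l) (Ψ ^ (m - β)) := by
        rw [Finset.mul_sum]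
        exact Finset.sum_congr rfl fun l _ => by rw [hA_pow]; ring
    _ = PowerSeries.coeff (m - β) (Φ ^ n) / n * (β * n / m * PowerSeries.coeff n (Ψ ^ m)) := by
        rw [sum_mul_coeff_pow_mul_coeffZ_sub _ _ _ (by omega), Nat.add_sub_cancel' hβm,
          coeffZ_natCast, Int.cast_natCast, Nat.cast_sub hβm, add_sub_cancel]
    _ = _ := by
        rw [coeffZ_natCast_sub hβm]
        field_simp

end System

/-- Chottin formula: if A = x·Φ(B) and B = y·Ψ(A), then for
α, β ≥ 0 and n, m ≥ 1,
[xⁿyᵐ] A^α B^β = (1 − (n−α)(m−β)/(nm))·[t^{m−β}]Φⁿ·[s^{n−α}]Ψᵐ. -/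
theorem stmt_6 (A B : MvPowerSeries (Fin 2) ℚ) (Φ Ψ : PowerSeries ℚ)
    (hA : A = MvPowerSeries.X 0 * phiComp Φ B)
    (hB : B = MvPowerSeries.X 1 * phiComp Ψ A)
    (α β n m : ℕ) (hn : 1 ≤ n) (hm : 1 ≤ m) :
    MvPowerSeries.coeff (Finsupp.single 0 n + Finsupp.single 1 m) (A ^ α * B ^ β) =
      (1 - (((n : ℚ) - α) * ((m : ℚ) - β)) / ((n : ℚ) * m)) *
        coeffZ ((m : ℤ) - β) (Φ ^ n) * coeffZ ((n : ℤ) - α) (Ψ ^ m) := by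
  rw [coeff_single_add_single_pow_mul (by decide) hA (constantCoeff_eq_zero_of_eq_X_mul hB)]
  split_ifs with hαn
  swap
  · rw [coeffZ_of_neg (by omega : (n : ℤ) - α < 0), mul_zero]
  have hK : (m : ℤ) - β < ((n - α + m + 1 : ℕ) : ℤ) := by omega
  calc _ = PowerSeries.coeff (n - α) (Ψ ^ m) / m *
        (β * ∑ k ∈ range (n - α + m + 1),
            PowerSeries.coeff k (Φ ^ α) * coeffZ ((m - β : ℤ) - k) (Φ ^ (n - α)) +
          ∑ k ∈ range (n - α + m + 1),
            k * PowerSeries.coeff k (Φ ^ α) * coeffZ ((m - β : ℤ) - k) (Φ ^ (n - α))) := by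
        rw [mul_sum, ← sum_add_distrib, mul_sum]
        refine sum_congr rfl fun k _ => ?_
        rw [← pow_add, add_comm k β, coeff_single_add_single_pow (by decide) hA hB _ hm]
        push_cast [sub_add_eq_sub_sub]
        ring
    _ = _ := by
        rw [sum_coeff_mul_coeffZ_sub _ _ hK, sum_mul_coeff_pow_mul_coeffZ_sub _ _ _ hK, ← pow_add,
          Nat.add_sub_cancel' hαn, Nat.cast_sub hαn, add_sub_cancel, coeffZ_natCast_sub hαn]
        field_simp
        push_cast
        ring
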